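/- arXiv:2407.06173 — 6 statements merged into one kernel-verified Lean document; each statement's English description precedes it below -/
import Mathlib

section
/- Let X and X̃ be two n×k matrices with entries in {−1,+1} that differ only in row i. Write L = [1_n, X] (with columns indexed 0,…,k and the convention x_{i0} = 1 for all i), S = LᵀL with entries s_{jl}, and Q(X) = Σ_{j=0}^k Σ_{l=0}^k s_{jl}². Let J = { j ∈ {0,…,k} : x̃_{ij} = −x_{ij} }. Then Q(X̃) − Q(X) = 8|J|(k+1−|J|) − 8 Σ_{j∈J} [ x_{ij} Σ_{l∉J} s_{jl} x_{il} ]. -/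
open Matrix BigOperators

/-- `L = [1ₙ, X]`: the matrix `X` with a column of ones prepended;
columns are indexed `0,…,k` with `L i 0 = 1`. -/
noncomputable def augment {n k : ℕ} (X : Matrix (Fin n) (Fin k) ℝ) :
    Matrix (Fin n) (Fin (k + 1)) ℝ :=
  Matrix.of fun i j => (Fin.cons (1 : ℝ) (X i) : Fin (k + 1) → ℝ) j

/-- `S = LᵀL`, the information matrix. -/
noncomputable def infoMat {n k : ℕ} (X : Matrix (Fin n) (Fin k) ℝ) :
    Matrix (Fin (k + 1)) (Fin (k + 1)) ℝ :=
  (augment X)ᵀ * augment X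

/-- `Q(X) = tr(S²) = Σⱼ Σₗ s_{jl}²`. -/
noncomputable def Qcrit {n k : ℕ} (X : Matrix (Fin n) (Fin k) ℝ) : ℝ :=
  ∑ j, ∑ l, (infoMat X j l) ^ 2

/-!
Changing row `i` of `L` from `r` to `r'` changes `S = LᵀL` by the rank-one terms
`r' r'ᵀ - r rᵀ`. Since `r'` is `r` with the signs on `J` flipped, `r'ⱼ r'ₗ = rⱼ rₗ` unless exactly
one of `j, l` lies in `J`, in which case `s_{jl}` drops by `2 rⱼ rₗ` and `s_{jl}²` changes by
`4 - 4 rⱼ s_{jl} rₗ`. Summing over the `2 |J| (k + 1 - |J|)` such ordered pairs, using the symmetry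
of `S`, gives the formula.
-/

open Finset

theorem Matrix.transpose_mul_self_apply_of_rows_eq {m n R : Type*} [Fintype m] [CommRing R]
    {A B : Matrix m n R} (i : m) (hAB : ∀ i', i' ≠ i → A i' = B i') (j l : n) :
    (Aᵀ * A) j l = (Bᵀ * B) j l + A i j * A i l - B i j * B i l := by
  have hdiff : ∑ a, (A a j * A a l - B a j * B a l) = A i j * A i l - B i j * B i l :=
    sum_eq_single i (fun a _ ha => by rw [hAB a ha]; ring) (by simp)
  simp only [mul_apply, transpose_apply, sum_sub_distrib] at hdiff ⊢
  linear_combination hdiff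

section FlipSigns

variable {ι R : Type*} [Fintype ι] [DecidableEq ι] [CommRing R]

theorem Finset.sum_sum_eq_two_mul_sum_sum_compl (f : ι → ι → R) (J : Finset ι)
    (hsymm : ∀ j l, f l j = f j l) (hzero : ∀ j l, (j ∈ J ↔ l ∈ J) → f j l = 0) :
    ∑ j, ∑ l, f j l = 2 * ∑ j ∈ J, ∑ l ∈ Jᶜ, f j l := by
  have hblock : ∀ s : Finset ι, (∀ j ∈ s, ∀ l ∈ s, f j l = 0) → ∑ j ∈ s, ∑ l ∈ s, f j l = 0 :=
    fun s hs => sum_eq_zero fun j hj => sum_eq_zero fun l hl => hs j hj l hl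
  have hJJ := hblock J fun j hj l hl => hzero j l (by simp [hj, hl])
  have hCC := hblock Jᶜ fun j hj l hl => hzero j l (by simp_all)
  have hCJ : ∑ j ∈ Jᶜ, ∑ l ∈ J, f j l = ∑ j ∈ J, ∑ l ∈ Jᶜ, f j l := by
    rw [sum_comm]; simp only [hsymm]
  rw [← sum_add_sum_compl J]
  simp only [← sum_add_sum_compl J (f _), sum_add_distrib]
  rw [hJJ, hCC, hCJ]
  ring

theorem sum_sum_sq_sub_of_flip_signs (S S' : Matrix ι ι R) (hS : S.IsSymm) (r r' : ι → R)
    (hr : ∀ j, r j ^ 2 = 1) (J : Finset ι) (hJ : ∀ j ∈ J, r' j = -r j)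
    (hJc : ∀ j ∉ J, r' j = r j) (hS' : ∀ j l, S' j l = S j l + r' j * r' l - r j * r l) :
    ∑ j, ∑ l, S' j l ^ 2 - ∑ j, ∑ l, S j l ^ 2
      = 8 * #J * #Jᶜ - 8 * ∑ j ∈ J, r j * ∑ l ∈ Jᶜ, S j l * r l := by
  have hcross : ∀ j ∈ J, ∀ l ∈ Jᶜ, S' j l ^ 2 - S j l ^ 2 = 4 - 4 * (r j * (S j l * r l)) := by
    intro j hj l hl
    rw [hS', hJ j hj, hJc l (mem_compl.1 hl)]
    linear_combination 4 * r l ^ 2 * hr j + 4 * hr l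
  rw [← sum_sub_distrib, sum_congr rfl fun j _ => (sum_sub_distrib ..).symm,
    sum_sum_eq_two_mul_sum_sum_compl _ J]
  · rw [sum_congr rfl fun j hj => sum_congr rfl (hcross j hj)]
    simp only [sum_sub_distrib, sum_const, nsmul_eq_mul, ← mul_sum]
    ring
  · intro j l
    rw [hS', hS', hS.apply]
    ring
  · intro j l hjl
    by_cases hj : j ∈ J
    · rw [hS', hJ j hj, hJ l (hjl.1 hj)]; ring
    · rw [hS', hJc j hj, hJc l (hj ∘ hjl.2)]; ring

end FlipSigns

theorem augment_sq {n k : ℕ} {X : Matrix (Fin n) (Fin k) ℝ} (hX : ∀ i j, X i j = 1 ∨ X i j = -1)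
    (i : Fin n) (j : Fin (k + 1)) : augment X i j ^ 2 = 1 := by
  refine Fin.cases ?_ (fun j' => ?_) j
  · simp [augment]
  · rcases hX i j' with h | h <;> simp [augment, h]

theorem augment_row_eq {n k : ℕ} {X Xt : Matrix (Fin n) (Fin k) ℝ} {i : Fin n}
    (h : ∀ j, Xt i j = X i j) : augment Xt i = augment X i := by
  ext j
  simp [augment, funext h]

theorem infoMat_isSymm {n k : ℕ} (X : Matrix (Fin n) (Fin k) ℝ) : (infoMat X).IsSymm := by
  simp [IsSymm, infoMat, transpose_mul]

/-- Proposition 1: if `X` and `X̃` differ only in row `i`, then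
with `J = {j : x̃ᵢⱼ = −xᵢⱼ}` (columns of `L` indexed `0,…,k`),
`Q(X̃) − Q(X) = 8|J|(k+1−|J|) − 8 Σ_{j∈J} [xᵢⱼ Σ_{l∉J} sⱼₗ xᵢₗ]`. -/
theorem stmt_0 {n k : ℕ} (X Xt : Matrix (Fin n) (Fin k) ℝ)
    (hX : ∀ i j, X i j = 1 ∨ X i j = -1)
    (hXt : ∀ i j, Xt i j = 1 ∨ Xt i j = -1)
    (i : Fin n)
    (hrow : ∀ i', i' ≠ i → ∀ j, Xt i' j = X i' j)
    (J : Finset (Fin (k + 1)))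
    (hJ : ∀ j : Fin (k + 1), j ∈ J ↔ augment Xt i j = -augment X i j) :
    Qcrit Xt - Qcrit X
      = 8 * (J.card : ℝ) * ((k : ℝ) + 1 - (J.card : ℝ))
        - 8 * ∑ j ∈ J, (augment X i j *
            ∑ l ∈ Jᶜ, infoMat X j l * augment X i l) := by
  have hunflipped : ∀ j ∉ J, augment Xt i j = augment X i j := fun j hj =>
    (sq_eq_sq_iff_eq_or_eq_neg.1 ((augment_sq hXt i j).trans (augment_sq hX i j).symm)).resolve_right
      (mt (hJ j).2 hj)
  have hcard : ((#Jᶜ : ℕ) : ℝ) = (k : ℝ) + 1 - #J := by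
    rw [card_compl, Fintype.card_fin, Nat.cast_sub (by simpa using J.card_le_univ)]
    push_cast; ring
  rw [← hcard]
  exact sum_sum_sq_sub_of_flip_signs _ _ (infoMat_isSymm X) _ _ (augment_sq hX i) J
    (fun j hj => (hJ j).1 hj) hunflipped
    (Matrix.transpose_mul_self_apply_of_rows_eq i fun i' hi' => augment_row_eq (hrow i' hi'))
end

section
/- Let X ∈ {−1,+1}^{n×k}, L = [1_n, X], S = LᵀL, and Q(X) = tr(S²). Fix a row index i and a column index j ∈ {1,…,k}, and let L_{i[j]} denote the row vector obtained from row i of L by replacing its entry in column j with zero. Let X̃ be obtained from X by changing the sign of the single entry x_{ij}. Then Q(X̃) < Q(X) if and only if k < x_{ij} · (L_{i[j]} S_{:,j}), and in that case Q(X̃) − Q(X) = 8(k − x_{ij} L_{i[j]} S_{:,j}). -/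
open Matrix BigOperators

/-- Corollary 1a, criterion change: for a single-coordinate
exchange at `(i, j)` (column `j ∈ {1,…,k}`, i.e. index `j.succ` in `L`),
`Q(X̃) < Q(X)` iff `k < xᵢⱼ · (L_{i[j]} S₍:,j₎)`, and in that case
`Q(X̃) − Q(X) = 8(k − xᵢⱼ L_{i[j]} S₍:,j₎)`. -/
theorem stmt_2 {n k : ℕ} (X Xt : Matrix (Fin n) (Fin k) ℝ)
    (hX : ∀ i j, X i j = 1 ∨ X i j = -1)
    (i : Fin n) (j : Fin k)
    (hXt : ∀ a b, Xt a b = if a = i ∧ b = j then -X a b else X a b) :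
    (Qcrit Xt < Qcrit X ↔
        (k : ℝ) < X i j *
          ∑ l, Function.update (augment X i) j.succ 0 l * infoMat X l j.succ) ∧
    ((k : ℝ) < X i j *
        ∑ l, Function.update (augment X i) j.succ 0 l * infoMat X l j.succ →
      Qcrit Xt - Qcrit X
        = 8 * ((k : ℝ) - X i j *
            ∑ l, Function.update (augment X i) j.succ 0 l
              * infoMat X l j.succ)) := by
  classical
  set M : ℝ := ∑ l, Function.update (augment X i) j.succ 0 l * infoMat X l j.succ
    with hM
  have hsq : ∀ (a : Fin n) (b : Fin (k + 1)), (augment X a b) ^ 2 = 1 := by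
    intro a b
    refine Fin.cases ?_ ?_ b
    · simp [augment]
    · intro c
      rcases hX a c with h | h <;> simp [augment, h]
  have hxsq : (X i j) ^ 2 = 1 := by
    rcases hX i j with h | h <;> rw [h] <;> norm_num
  have hL' : ∀ a b, augment Xt a b =
      if a = i ∧ b = j.succ then -(augment X a b) else augment X a b := by
    intro a b
    refine Fin.cases ?_ ?_ b
    · have h0 : ((0 : Fin (k + 1)) ≠ j.succ) := (Fin.succ_ne_zero j).symm
      simp [augment, h0]
    · intro c
      have hiff : (Fin.succ c = Fin.succ j) ↔ (c = j) := Fin.succ_inj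
      simp only [augment, Matrix.of_apply, Fin.cons_succ, hXt a c, hiff]
  have hSsum : ∀ (Y : Matrix (Fin n) (Fin k) ℝ) a b,
      infoMat Y a b = ∑ t, augment Y t a * augment Y t b := by
    intro Y a b; simp [infoMat, Matrix.mul_apply]
  have hSsymm : ∀ a b, infoMat X a b = infoMat X b a := by
    intro a b; simp [hSsum, mul_comm]
  set E : Fin (k + 1) → Fin (k + 1) → ℝ := fun a b =>
    augment Xt i a * augment Xt i b - augment X i a * augment X i b with hE
  have hS' : ∀ a b, infoMat Xt a b = infoMat X a b + E a b := by
    intro a b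
    rw [hSsum, hSsum]
    have hterm : ∀ t : Fin n, augment Xt t a * augment Xt t b
        = augment X t a * augment X t b + (if t = i then E a b else 0) := by
      intro t
      by_cases ht : t = i
      · subst ht; simp [hE]
      · simp [hL', ht]
    rw [Finset.sum_congr rfl fun t _ => hterm t, Finset.sum_add_distrib]
    simp
  have haugjj : augment X i j.succ = X i j := by simp [augment]
  have hLtjj : augment Xt i j.succ = -(augment X i j.succ) := by
    rw [hL']; simp
  have hEjj : ∀ b, b ≠ j.succ → E j.succ b = -2 * X i j * augment X i b := by
    intro b hb
    have h2 : augment Xt i b = augment X i b := by rw [hL']; simp [hb]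
    simp only [hE, hLtjj, h2, haugjj]; ring
  have hEjj2 : ∀ a, a ≠ j.succ → E a j.succ = -2 * X i j * augment X i a := by
    intro a ha
    have h2 : augment Xt i a = augment X i a := by rw [hL']; simp [ha]
    simp only [hE, hLtjj, h2, haugjj]; ring
  have hEd : E j.succ j.succ = 0 := by
    simp only [hE, hLtjj]; ring
  have hE0 : ∀ a b, a ≠ j.succ → b ≠ j.succ → E a b = 0 := by
    intro a b ha hb
    have h1 : augment Xt i a = augment X i a := by rw [hL']; simp [ha]
    have h2 : augment Xt i b = augment X i b := by rw [hL']; simp [hb]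
    simp [hE, h1, h2]
  have hdiff : Qcrit Xt - Qcrit X
      = ∑ a, ∑ b, (2 * infoMat X a b * E a b + (E a b) ^ 2) := by
    unfold Qcrit
    rw [← Finset.sum_sub_distrib]
    refine Finset.sum_congr rfl fun a _ => ?_
    rw [← Finset.sum_sub_distrib]
    refine Finset.sum_congr rfl fun b _ => ?_
    rw [hS']; ring
  have hcard : (Finset.univ.erase j.succ).card = k := by
    simp [Finset.card_erase_of_mem]
  have hMerase : M = ∑ l ∈ Finset.univ.erase j.succ,
      augment X i l * infoMat X l j.succ := by
    rw [hM, ← Finset.add_sum_erase _ _ (Finset.mem_univ j.succ)]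
    rw [Function.update_self, zero_mul, zero_add]
    refine Finset.sum_congr rfl fun l hl => ?_
    rw [Function.update_of_ne (Finset.ne_of_mem_erase hl)]
  have hsum4 : ∑ l ∈ Finset.univ.erase j.succ,
      (4 - 4 * (X i j * (augment X i l * infoMat X l j.succ)))
      = 4 * k - 4 * (X i j * M) := by
    rw [Finset.sum_sub_distrib, Finset.sum_const, nsmul_eq_mul, hcard,
      hMerase, ← Finset.mul_sum, ← Finset.mul_sum]
    ring
  have key : Qcrit Xt - Qcrit X = 8 * ((k : ℝ) - X i j * M) := by
    rw [hdiff, ← Finset.add_sum_erase _ _ (Finset.mem_univ j.succ)]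
    have inner_jj : ∑ b, (2 * infoMat X j.succ b * E j.succ b + (E j.succ b) ^ 2)
        = 4 * k - 4 * (X i j * M) := by
      rw [← Finset.add_sum_erase _ _ (Finset.mem_univ j.succ), hEd]
      rw [show (2 : ℝ) * infoMat X j.succ j.succ * 0 + 0 ^ 2 = 0 by ring, zero_add]
      rw [← hsum4]
      refine Finset.sum_congr rfl fun b hb => ?_
      have hb' := Finset.ne_of_mem_erase hb
      rw [hEjj b hb', hSsymm j.succ b]
      linear_combination 4 * (augment X i b) ^ 2 * hxsq + 4 * hsq i b
    have outer : ∑ a ∈ Finset.univ.erase j.succ,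
        ∑ b, (2 * infoMat X a b * E a b + (E a b) ^ 2)
        = 4 * k - 4 * (X i j * M) := by
      rw [← hsum4]
      refine Finset.sum_congr rfl fun a ha => ?_
      have ha' := Finset.ne_of_mem_erase ha
      rw [← Finset.add_sum_erase _ _ (Finset.mem_univ j.succ)]
      have hz : ∑ b ∈ Finset.univ.erase j.succ,
          (2 * infoMat X a b * E a b + (E a b) ^ 2) = 0 :=
        Finset.sum_eq_zero fun b hb => by
          rw [hE0 a b ha' (Finset.ne_of_mem_erase hb)]; ring
      rw [hz, add_zero, hEjj2 a ha']
      linear_combination 4 * (augment X i a) ^ 2 * hxsq + 4 * hsq i a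
    rw [inner_jj, outer]
    ring
  refine ⟨⟨fun h => ?_, fun h => ?_⟩, fun _ => key⟩
  · nlinarith [key]
  · nlinarith [key]
end

section
/- For any matrix X ∈ {−1,+1}^{n×k}, with L = [1_n, X], S = LᵀL, and Q(X) = tr(S²), one has Q(X) = n²(1 − k²) + 2‖Xᵀ1_n‖₂² + 2n‖X 1_k‖₂² + Σ_{l=1}^k Σ_{j=1}^k ‖X_{:,l} − X_{:,j}‖₁². -/
open Matrix BigOperators

/-- `Q(X) = n²(1−k²) + 2‖Xᵀ1ₙ‖₂² + 2n‖X1ₖ‖₂² + Σₗ Σⱼ ‖X₍:,l₎ − X₍:,j₎‖₁²`. -/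
theorem stmt_6 {n k : ℕ} (X : Matrix (Fin n) (Fin k) ℝ)
    (hX : ∀ i j, X i j = 1 ∨ X i j = -1) :
    Qcrit X = (n : ℝ) ^ 2 * (1 - (k : ℝ) ^ 2)
      + 2 * ∑ j, (∑ i, X i j) ^ 2
      + 2 * (n : ℝ) * ∑ i, (∑ j, X i j) ^ 2
      + ∑ l, ∑ j, (∑ i, |X i l - X i j|) ^ 2 := by
  have hinfo : ∀ a b, infoMat X a b = ∑ i, augment X i a * augment X i b := by
    intro a b
    simp [infoMat, Matrix.mul_apply, Matrix.transpose_apply]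
  have h00 : infoMat X 0 0 = (n : ℝ) := by
    rw [hinfo]; simp [augment]
  have h0s : ∀ j : Fin k, infoMat X 0 j.succ = ∑ i, X i j := by
    intro j; rw [hinfo]; simp [augment]
  have hs0 : ∀ j : Fin k, infoMat X j.succ 0 = ∑ i, X i j := by
    intro j; rw [hinfo]; simp [augment]
  have hss : ∀ l j : Fin k, infoMat X l.succ j.succ = ∑ i, X i l * X i j := by
    intro l j; rw [hinfo]; simp [augment]
  have hQ : Qcrit X = (n : ℝ) ^ 2 + 2 * (∑ j, (∑ i, X i j) ^ 2)
      + ∑ l, ∑ j, (∑ i, X i l * X i j) ^ 2 := by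
    simp only [Qcrit, Fin.sum_univ_succ, h00, h0s, hs0, hss, Finset.sum_add_distrib]
    ring
  have habs : ∀ (i : Fin n) (l j : Fin k), |X i l - X i j| = 1 - X i l * X i j := by
    intro i l j
    rcases hX i l with h1 | h1 <;> rcases hX i j with h2 | h2 <;>
      rw [h1, h2] <;> norm_num
  have hsum_abs : ∀ l j : Fin k, (∑ i, |X i l - X i j|) = (n : ℝ) - ∑ i, X i l * X i j := by
    intro l j
    simp only [habs]
    rw [Finset.sum_sub_distrib]
    simp
  have hR : (∑ l, ∑ j, ∑ i, X i l * X i j) = ∑ i, (∑ j, X i j) ^ 2 := by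
    have h1 : ∀ l : Fin k, (∑ j, ∑ i, X i l * X i j) = ∑ i, ∑ j, X i l * X i j :=
      fun l => by rw [Finset.sum_comm]
    simp only [h1]
    rw [Finset.sum_comm]
    refine Finset.sum_congr rfl fun i _ => ?_
    rw [sq, Finset.sum_mul_sum]
  have hlast : (∑ l, ∑ j, (∑ i, |X i l - X i j|) ^ 2)
      = (k : ℝ) ^ 2 * (n : ℝ) ^ 2 - 2 * (n : ℝ) * ∑ i, (∑ j, X i j) ^ 2
        + ∑ l, ∑ j, (∑ i, X i l * X i j) ^ 2 := by
    simp only [hsum_abs, sub_sq]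
    rw [← hR]
    simp only [Finset.sum_add_distrib, Finset.sum_sub_distrib, Finset.sum_const,
      Finset.card_univ, Fintype.card_fin, nsmul_eq_mul, Finset.mul_sum]
    ring
  rw [hQ, hlast]
  ring
end

section
/- Let X ∈ {−1,+1}^{n×k} and let c be an integer with 0 ≤ c ≤ k. Suppose every row of X sums to 2c − k, i.e., X 1_k = (2c − k) 1_n. Define γ = ⌊nc/k⌋ and δ = nc − kγ. Then ‖Xᵀ1_n‖₂² ≥ (k − δ)(n − 2γ)² + δ(n − 2γ − 2)². -/
open Finset

/-!
Let `p j` be the number of `+1` entries of column `j`, so that the column sum is `2 p j - n` and,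
counting the entries of `X` by rows, `∑ j, p j = n c`. For integers `p` and `g` the parabola
`p ↦ (2p - n)²` lies above its chord over `[g, g + 1]`, because the gap is `4 (p - g) (p - g - 1) ≥ 0`.
Summing the chord values with `g = γ` gives exactly `(k - δ)(n - 2γ)² + δ(n - 2γ - 2)²`.
-/

theorem sum_eq_two_mul_card_sub_card {ι R : Type*} [Fintype ι] [Ring R] [DecidableEq R]
    {v : ι → R} (hv : ∀ i, v i = 1 ∨ v i = -1) :
    ∑ i, v i = 2 * (#{i | v i = 1} : R) - Fintype.card ι := by
  have hterm : ∀ i, v i = 2 * (if v i = 1 then 1 else 0) - 1 := by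
    intro i
    by_cases h1 : v i = 1
    · rw [if_pos h1, h1]
      norm_num
    · rw [if_neg h1, (hv i).resolve_left h1]
      simp
  rw [sum_congr rfl fun i _ => hterm i, sum_sub_distrib, ← mul_sum,
    sum_boole]
  simp

theorem Int.mul_sub_one_nonneg (m : ℤ) : 0 ≤ m * (m - 1) := by
  rcases le_or_gt m 0 with h | h <;> nlinarith

theorem chord_le_sq_two_mul_sub (p g n : ℤ) :
    (1 - (p - g)) * (n - 2 * g) ^ 2 + (p - g) * (n - 2 * g - 2) ^ 2 ≤ (2 * p - n) ^ 2 := by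
  nlinarith [Int.mul_sub_one_nonneg (p - g)]

theorem chord_sum_le_sum_sq_two_mul_sub {ι : Type*} [Fintype ι] (p : ι → ℤ) (g n : ℤ) :
    (Fintype.card ι - (∑ j, p j - Fintype.card ι * g)) * (n - 2 * g) ^ 2
        + (∑ j, p j - Fintype.card ι * g) * (n - 2 * g - 2) ^ 2
      ≤ ∑ j, (2 * p j - n) ^ 2 :=
  calc _ = ∑ j, ((1 - (p j - g)) * (n - 2 * g) ^ 2 + (p j - g) * (n - 2 * g - 2) ^ 2) := by
          simp only [sum_add_distrib, ← sum_mul, sum_sub_distrib,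
            sum_const, card_univ, nsmul_eq_mul, mul_one]
    _ ≤ _ := sum_le_sum fun j _ => chord_le_sq_two_mul_sub (p j) g n

theorem stmt_7_general {n k : ℕ} (X : Matrix (Fin n) (Fin k) ℝ)
    (hX : ∀ i j, X i j = 1 ∨ X i j = -1)
    (c : ℕ)
    (hrow : ∀ i, ∑ j, X i j = 2 * (c : ℝ) - (k : ℝ))
    (γ δ : ℕ) (hγ : γ = n * c / k) (hδ : δ = n * c - k * γ) :
    ∑ j, (∑ i, X i j) ^ 2
      ≥ ((k : ℝ) - (δ : ℝ)) * ((n : ℝ) - 2 * (γ : ℝ)) ^ 2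
        + (δ : ℝ) * ((n : ℝ) - 2 * (γ : ℝ) - 2) ^ 2 := by
  set p : Fin k → ℕ := fun j => #{i | X i j = 1}
  have hcol : ∀ j, ∑ i, X i j = 2 * (p j : ℝ) - n := by
    intro j
    simpa using sum_eq_two_mul_card_sub_card fun i => hX i j
  have hp : ∑ j, (p j : ℝ) = n * c := by
    have htotal : 2 * ∑ j, (p j : ℝ) - k * n = n * (2 * c - k) :=
      calc _ = ∑ j, ∑ i, X i j := by simp [hcol, sum_sub_distrib, mul_sum]
        _ = ∑ i, ∑ j, X i j := sum_comm
        _ = _ := by simp [hrow, mul_sub]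
    linarith
  have hkγ : k * γ ≤ n * c := by
    rw [hγ, mul_comm]
    exact Nat.div_mul_le_self _ _
  have hchord := (Int.cast_le (R := ℝ)).mpr
    (chord_sum_le_sum_sq_two_mul_sub (fun j => (p j : ℤ)) γ n)
  push_cast [Fintype.card_fin] at hchord
  rw [hδ, Nat.cast_sub hkγ]
  push_cast
  simpa only [hcol, hp] using hchord

/-- if every row of `X ∈ {±1}^{n×k}` sums to `2c − k`, then with
`γ = ⌊nc/k⌋` and `δ = nc − kγ`, one has
`‖Xᵀ1ₙ‖₂² ≥ (k − δ)(n − 2γ)² + δ(n − 2γ − 2)²`. -/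
theorem stmt_7 {n k : ℕ} (X : Matrix (Fin n) (Fin k) ℝ)
    (hX : ∀ i j, X i j = 1 ∨ X i j = -1)
    (c : ℕ) (hck : c ≤ k)
    (hrow : ∀ i, ∑ j, X i j = 2 * (c : ℝ) - (k : ℝ))
    (γ δ : ℕ) (hγ : γ = n * c / k) (hδ : δ = n * c - k * γ) :
    ∑ j, (∑ i, X i j) ^ 2
      ≥ ((k : ℝ) - (δ : ℝ)) * ((n : ℝ) - 2 * (γ : ℝ)) ^ 2
        + (δ : ℝ) * ((n : ℝ) - 2 * (γ : ℝ) - 2) ^ 2 :=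
  stmt_7_general X hX c hrow γ δ hγ hδ
end

section
/- Let X ∈ {−1,+1}^{n×k} with k ≥ 2, and let c be an integer with 0 ≤ c ≤ k. Suppose every row of X sums to 2c − k, i.e., X 1_k = (2c − k) 1_n. Define φ = ⌊2nc(k−c)/(k²−k)⌋ and ψ = 2nc(k−c) − (k²−k)φ. Then Σ_{l=1}^k Σ_{j=1}^k ‖X_{:,l} − X_{:,j}‖₁² ≥ 4[(k²−k)φ² + ψ(2φ+1)]. -/
/-!
For ±1 columns, `‖X₍:,l₎ − X₍:,j₎‖₁` is twice the Hamming distance `D l j`. Expanding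
`|x − y| = 1 − xy` row by row shows that the row sums alone fix `∑ₗ ∑ⱼ D l j = 2nc(k − c)`.
Since the `D l j` are integers, `(D − φ)(D − φ − 1) ≥ 0`, i.e. `D² ≥ φ² + (2φ + 1)(D − φ)`;
summing this over the `k² − k` off-diagonal pairs (the diagonal vanishes) gives the bound.
-/

open Finset

theorem Int.card_mul_sq_add_le_sum_sq {ι : Type*} (s : Finset ι) (a : ι → ℤ) (φ : ℤ) :
    #s * φ ^ 2 + (2 * φ + 1) * (∑ i ∈ s, a i - #s * φ) ≤ ∑ i ∈ s, a i ^ 2 := by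
  have key : ∀ i ∈ s, φ ^ 2 + (2 * φ + 1) * (a i - φ) ≤ a i ^ 2 := fun i _ => by
    nlinarith [Int.le_self_sq (a i - φ)]
  calc #s * φ ^ 2 + (2 * φ + 1) * (∑ i ∈ s, a i - #s * φ)
      = ∑ i ∈ s, (φ ^ 2 + (2 * φ + 1) * (a i - φ)) := by
        simp only [sum_add_distrib, sum_const, nsmul_eq_mul, ← mul_sum, sum_sub_distrib]
    _ ≤ ∑ i ∈ s, a i ^ 2 := sum_le_sum key

theorem Fintype.sum_sum_eq_sum_offDiag {ι M : Type*} [Fintype ι] [DecidableEq ι]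
    [AddCommMonoid M] (f : ι → ι → M) (hf : ∀ i, f i i = 0) :
    ∑ i, ∑ j, f i j = ∑ p ∈ univ.offDiag, f p.1 p.2 := by
  rw [← Fintype.sum_prod_type', ← univ_product_univ]
  refine (Finset.sum_subset (fun p hp => ?_) fun p _ hp => ?_).symm
  · simp
  · simp only [mem_offDiag, mem_univ, true_and, ne_eq, not_not] at hp
    rw [← hp, hf]

theorem Int.card_offDiag_mul_sq_add_le_sum_sum_sq {ι : Type*} [Fintype ι] (D : ι → ι → ℤ)
    (hD : ∀ i, D i i = 0) (φ : ℤ) :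
    ((Fintype.card ι : ℤ) ^ 2 - Fintype.card ι) * φ ^ 2
      + (2 * φ + 1) * (∑ i, ∑ j, D i j - ((Fintype.card ι : ℤ) ^ 2 - Fintype.card ι) * φ)
      ≤ ∑ i, ∑ j, D i j ^ 2 := by
  classical
  have hcard :
      (#(univ : Finset ι).offDiag : ℤ) = (Fintype.card ι : ℤ) ^ 2 - Fintype.card ι := by
    rw [offDiag_card, card_univ, Nat.cast_sub (Nat.le_mul_self _)]
    push_cast; ring
  rw [Fintype.sum_sum_eq_sum_offDiag D hD,
    Fintype.sum_sum_eq_sum_offDiag (fun i j => D i j ^ 2) (fun i => by simp [hD]), ← hcard]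
  exact Int.card_mul_sq_add_le_sum_sq _ _ φ

theorem abs_sub_eq_one_sub_mul_of_sign {a b : ℝ} (ha : a = 1 ∨ a = -1) (hb : b = 1 ∨ b = -1) :
    |a - b| = 1 - a * b := by
  rcases ha with rfl | rfl <;> rcases hb with rfl | rfl <;> norm_num

theorem sum_abs_sub_eq_two_mul_hammingDist {ι : Type*} [Fintype ι] {x y : ι → ℝ}
    (hx : ∀ i, x i = 1 ∨ x i = -1) (hy : ∀ i, y i = 1 ∨ y i = -1) :
    ∑ i, |x i - y i| = 2 * hammingDist x y := by
  have hterm : ∀ i, |x i - y i| = 2 * if x i ≠ y i then 1 else 0 := fun i => by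
    rcases hx i with h | h <;> rcases hy i with h' | h' <;> simp [h, h'] <;> norm_num
  simp only [hterm, ← mul_sum, hammingDist, card_filter]
  push_cast; rfl

theorem sum_sum_abs_sub_of_sign {ι : Type*} [Fintype ι] {x : ι → ℝ}
    (hx : ∀ i, x i = 1 ∨ x i = -1) :
    ∑ l, ∑ j, |x l - x j| = (Fintype.card ι : ℝ) ^ 2 - (∑ i, x i) ^ 2 := by
  simp only [fun l j => abs_sub_eq_one_sub_mul_of_sign (hx l) (hx j), sum_sub_distrib, sum_const,
    card_univ, nsmul_eq_mul, sq, sum_mul_sum]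
  simp

theorem two_mul_sum_sum_hammingDist_col_of_sign {m ι : Type*} [Fintype m] [Fintype ι]
    {X : Matrix m ι ℝ} (hX : ∀ i j, X i j = 1 ∨ X i j = -1) :
    2 * ∑ l, ∑ j, (hammingDist (fun i => X i l) (fun i => X i j) : ℝ)
      = ∑ i, ((Fintype.card ι : ℝ) ^ 2 - (∑ j, X i j) ^ 2) :=
  calc 2 * ∑ l, ∑ j, (hammingDist (fun i => X i l) (fun i => X i j) : ℝ)
      = ∑ l, ∑ j, ∑ i, |X i l - X i j| := by
        simp only [mul_sum, sum_abs_sub_eq_two_mul_hammingDist (fun i => hX i _) (fun i => hX i _)]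
    _ = ∑ i, ∑ l, ∑ j, |X i l - X i j| :=
        (sum_congr rfl fun _ _ => Finset.sum_comm).trans Finset.sum_comm
    _ = ∑ i, ((Fintype.card ι : ℝ) ^ 2 - (∑ j, X i j) ^ 2) := by
        simp only [sum_sum_abs_sub_of_sign (hX _)]

theorem stmt_8_general {n k : ℕ} (X : Matrix (Fin n) (Fin k) ℝ)
    (hX : ∀ i j, X i j = 1 ∨ X i j = -1)
    (c : ℕ) (hck : c ≤ k)
    (hrow : ∀ i, ∑ j, X i j = 2 * (c : ℝ) - (k : ℝ))
    (φ ψ : ℕ)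
    (hφ : φ = 2 * n * c * (k - c) / (k ^ 2 - k))
    (hψ : ψ = 2 * n * c * (k - c) - (k ^ 2 - k) * φ) :
    ∑ l, ∑ j, (∑ i, |X i l - X i j|) ^ 2
      ≥ 4 * (((k : ℝ) ^ 2 - (k : ℝ)) * (φ : ℝ) ^ 2
          + (ψ : ℝ) * (2 * (φ : ℝ) + 1)) := by
  set D : Fin k → Fin k → ℕ := fun l j => hammingDist (fun i => X i l) (fun i => X i j)
  have hcol : ∀ l j, ∑ i, |X i l - X i j| = 2 * (D l j : ℝ) := fun l j =>
    sum_abs_sub_eq_two_mul_hammingDist (fun i => hX i l) (fun i => hX i j)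
  have htotal : ∑ l, ∑ j, (D l j : ℝ) = 2 * n * c * (k - c) := by
    have h := two_mul_sum_sum_hammingDist_col_of_sign hX
    simp only [hrow, sum_const, card_univ, Fintype.card_fin, nsmul_eq_mul] at h
    linarith
  have hψR : (ψ : ℝ) = 2 * n * c * (k - c) - ((k : ℝ) ^ 2 - k) * φ := by
    have hle : (k ^ 2 - k) * φ ≤ 2 * n * c * (k - c) := hφ ▸ Nat.mul_div_le _ _
    rw [hψ, Nat.cast_sub hle]
    push_cast [Nat.cast_sub hck, Nat.cast_sub (Nat.le_self_pow two_ne_zero k)]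
    ring
  have hsq : ((k : ℝ) ^ 2 - k) * φ ^ 2
      + (2 * φ + 1) * (∑ l, ∑ j, (D l j : ℝ) - ((k : ℝ) ^ 2 - k) * φ)
      ≤ ∑ l, ∑ j, (D l j : ℝ) ^ 2 := by
    have h := Int.card_offDiag_mul_sq_add_le_sum_sum_sq (fun l j => (D l j : ℤ))
      (fun l => by simp [D]) φ
    rw [Fintype.card_fin] at h
    exact_mod_cast h
  simp only [hcol, mul_pow, ← mul_sum]
  rw [hψR, ← htotal]
  linarith

/-- if `k ≥ 2` and every row of `X ∈ {±1}^{n×k}` sums to `2c − k`,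
then with `φ = ⌊2nc(k−c)/(k²−k)⌋` and `ψ = 2nc(k−c) − (k²−k)φ`, one has
`Σₗ Σⱼ ‖X₍:,l₎ − X₍:,j₎‖₁² ≥ 4[(k²−k)φ² + ψ(2φ+1)]`. -/
theorem stmt_8 {n k : ℕ} (X : Matrix (Fin n) (Fin k) ℝ)
    (hX : ∀ i j, X i j = 1 ∨ X i j = -1)
    (hk : 2 ≤ k)
    (c : ℕ) (hck : c ≤ k)
    (hrow : ∀ i, ∑ j, X i j = 2 * (c : ℝ) - (k : ℝ))
    (φ ψ : ℕ)
    (hφ : φ = 2 * n * c * (k - c) / (k ^ 2 - k))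
    (hψ : ψ = 2 * n * c * (k - c) - (k ^ 2 - k) * φ) :
    ∑ l, ∑ j, (∑ i, |X i l - X i j|) ^ 2
      ≥ 4 * (((k : ℝ) ^ 2 - (k : ℝ)) * (φ : ℝ) ^ 2
          + (ψ : ℝ) * (2 * (φ : ℝ) + 1)) :=
  stmt_8_general X hX c hck hrow φ ψ hφ hψ
end

section
/- For any matrix X ∈ {−1,+1}^{n×k}, the identity tr(XᵀX XᵀX) = −n²k² + 2n‖X 1_k‖₂² + Σ_{l=1}^k Σ_{j=1}^k ‖X_{:,l} − X_{:,j}‖₁² holds. -/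
open Matrix BigOperators

/-- `tr(XᵀX XᵀX) = −n²k² + 2n‖X1ₖ‖₂² + Σₗ Σⱼ ‖X₍:,l₎ − X₍:,j₎‖₁²`. -/
theorem stmt_11 {n k : ℕ} (X : Matrix (Fin n) (Fin k) ℝ)
    (hX : ∀ i j, X i j = 1 ∨ X i j = -1) :
    Matrix.trace (Xᵀ * X * (Xᵀ * X))
      = -((n : ℝ) ^ 2 * (k : ℝ) ^ 2)
        + 2 * (n : ℝ) * ∑ i, (∑ j, X i j) ^ 2
        + ∑ l, ∑ j, (∑ i, |X i l - X i j|) ^ 2 := by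
  -- inner products of columns
  have habs : ∀ (l j : Fin k),
      (∑ i, |X i l - X i j|) = (n : ℝ) - ∑ i, X i l * X i j := by
    intro l j
    have h1 : ∀ i, |X i l - X i j| = 1 - X i l * X i j := by
      intro i
      rcases hX i l with h1 | h1 <;> rcases hX i j with h2 | h2 <;>
        rw [h1, h2] <;> norm_num
    rw [Finset.sum_congr rfl fun i _ => h1 i, Finset.sum_sub_distrib]
    simp
  -- the trace as a double sum of squared inner products
  have htr : Matrix.trace (Xᵀ * X * (Xᵀ * X))
      = ∑ l : Fin k, ∑ j : Fin k, (∑ i, X i l * X i j) ^ 2 := by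
    simp only [Matrix.trace, Matrix.diag_apply, Matrix.mul_apply, Matrix.transpose_apply,
      Finset.sum_mul]
    refine Finset.sum_congr rfl fun l _ => Finset.sum_congr rfl fun j _ => ?_
    rw [← Finset.sum_mul, sq]
    exact congrArg (fun t => (∑ i, X i l * X i j) * t)
      (Finset.sum_congr rfl fun i _ => mul_comm _ _)
  -- the total sum of inner products equals the squared row sums
  have hsum : ∑ l : Fin k, ∑ j : Fin k, ∑ i, X i l * X i j
      = ∑ i, (∑ j, X i j) ^ 2 := by
    have h1 : ∀ l : Fin k, (∑ j : Fin k, ∑ i, X i l * X i j) = ∑ i, ∑ j, X i l * X i j :=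
      fun l => by rw [Finset.sum_comm]
    simp only [h1]
    rw [Finset.sum_comm]
    refine Finset.sum_congr rfl fun i _ => ?_
    rw [sq, Finset.sum_mul]
    exact Finset.sum_congr rfl fun l _ => (Finset.mul_sum _ _ _).symm
  have hexp : ∀ (l j : Fin k), (∑ i, |X i l - X i j|) ^ 2
      = (n : ℝ) ^ 2 - 2 * n * (∑ i, X i l * X i j) + (∑ i, X i l * X i j) ^ 2 := by
    intro l j; rw [habs]; ring
  rw [htr]
  have hrhs : ∑ l : Fin k, ∑ j : Fin k, (∑ i, |X i l - X i j|) ^ 2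
      = (n : ℝ) ^ 2 * (k : ℝ) ^ 2 - 2 * n * (∑ i, (∑ j, X i j) ^ 2)
        + ∑ l : Fin k, ∑ j : Fin k, (∑ i, X i l * X i j) ^ 2 := by
    simp only [hexp, Finset.sum_add_distrib, Finset.sum_sub_distrib, Finset.sum_const,
      Finset.card_univ, Fintype.card_fin, nsmul_eq_mul, ← Finset.mul_sum, hsum]
    ring
  rw [hrhs]
  ring
end
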